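/- arXiv:2602.06576 — 11 statements merged into one kernel-verified Lean document; each statement's English description precedes it below -/
import Mathlib

section
/- If (𝒜, ≼, ·) is an applicative structure and a ⇝ b := ⨆{c ∈ 𝒜 : c·a ≼ b}, then (𝒜, ≼, ⇝) is an implicative structure (⇝ satisfies both implicative-structure axioms), and moreover the application defined from ⇝ by a b := ⨅{c ∈ 𝒜 : a ≼ b ⇝ c} coincides with a·b for all a, b ∈ 𝒜. -/
/-- an applicative structure yields an implicative structure via
`a ⇝ b := ⨆{c | c·a ≤ b}`, and the application recovered from `⇝` coincides with `·`. -/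
theorem stmt_1 {α : Type*} [CompleteLattice α] (app : α → α → α)
    (happ_mono : ∀ a a' b b' : α, a ≤ a' → b ≤ b' → app a b ≤ app a' b')
    (happ_sup : ∀ (X : Set α) (b : α), app (sSup X) b = ⨆ a ∈ X, app a b)
    (arr : α → α → α)
    (harr : ∀ a b : α, arr a b = sSup {c : α | app c a ≤ b}) :
    (∀ a a' b b' : α, a' ≤ a → b ≤ b' → arr a b ≤ arr a' b') ∧
    (∀ (a : α) (B : Set α), arr a (sInf B) = ⨅ b ∈ B, arr a b) ∧
    (∀ a b : α, sInf {c : α | a ≤ arr b c} = app a b) := by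
  have adj : ∀ a b c : α, app c a ≤ b ↔ c ≤ arr a b := by
    intro a b c
    constructor
    · intro h
      rw [harr]
      exact le_sSup h
    · intro h
      calc app c a ≤ app (arr a b) a := happ_mono _ _ _ _ h le_rfl
        _ = ⨆ x ∈ {c : α | app c a ≤ b}, app x a := by rw [harr, happ_sup]
        _ ≤ b := by
            apply iSup₂_le
            intro x hx
            exact hx
  refine ⟨?_, ?_, ?_⟩
  · intro a a' b b' ha hb
    rw [← adj]
    calc app (arr a b) a' ≤ app (arr a b) a := happ_mono _ _ _ _ le_rfl ha
      _ ≤ b := (adj a b _).mpr le_rfl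
      _ ≤ b' := hb
  · intro a B
    apply le_antisymm
    · apply le_iInf₂
      intro b hb
      rw [← adj]
      exact le_trans ((adj a _ _).mpr le_rfl) (sInf_le hb)
    · rw [← adj, le_sInf_iff]
      intro b hb
      rw [adj]
      exact iInf₂_le b hb
  · intro a b
    apply le_antisymm
    · exact sInf_le ((adj b _ a).mp le_rfl)
    · apply le_sInf
      intro c hc
      exact (adj b c a).mpr hc
end

section
/- If (𝒜, ≼, →) is an implicative structure and one defines a·b := ⨅{c ∈ 𝒜 : a ≼ b → c}, then (𝒜, ≼, ·) is an applicative structure, and the operation a ⇝ b := ⨆{c ∈ 𝒜 : c·a ≼ b} coincides with a → b for all a, b ∈ 𝒜. -/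
/-- an implicative structure yields an applicative structure via
`a·b := ⨅{c | a ≤ b → c}`, and the implication recovered from `·` coincides with `→`. -/
theorem stmt_2 {α : Type*} [CompleteLattice α] (arr : α → α → α)
    (harr_mono : ∀ a a' b b' : α, a' ≤ a → b ≤ b' → arr a b ≤ arr a' b')
    (harr_inf : ∀ (a : α) (B : Set α), arr a (sInf B) = ⨅ b ∈ B, arr a b)
    (app : α → α → α)
    (happ : ∀ a b : α, app a b = sInf {c : α | a ≤ arr b c}) :
    (∀ a a' b b' : α, a ≤ a' → b ≤ b' → app a b ≤ app a' b') ∧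
    (∀ (X : Set α) (b : α), app (sSup X) b = ⨆ a ∈ X, app a b) ∧
    (∀ a b : α, sSup {c : α | app c a ≤ b} = arr a b) := by
  -- key: a ≤ arr b (app a b)
  have hkey : ∀ a b : α, a ≤ arr b (app a b) := by
    intro a b
    rw [happ, harr_inf]
    exact le_iInf₂ fun c hc => hc
  have hadj : ∀ a b c : α, app a b ≤ c ↔ a ≤ arr b c := by
    intro a b c
    constructor
    · intro h
      exact (hkey a b).trans (harr_mono b b _ c le_rfl h)
    · intro h
      rw [happ]
      exact sInf_le h
  refine ⟨?_, ?_, ?_⟩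
  · intro a a' b b' ha hb
    rw [hadj]
    exact (ha.trans ((hkey a' b').trans (harr_mono b' b _ _ hb le_rfl)))
  · intro X b
    apply le_antisymm
    · rw [hadj]
      apply sSup_le
      intro a haX
      rw [← hadj]
      exact le_iSup₂ (f := fun a (_ : a ∈ X) => app a b) a haX
    · exact iSup₂_le fun a haX => (hadj _ _ _).2 ((le_sSup haX).trans (hkey _ _))
  · intro a b
    apply le_antisymm
    · apply sSup_le
      intro c hc
      have : c ≤ arr a (app c a) := hkey c a
      exact this.trans (harr_mono a a _ b le_rfl hc)
    · apply le_sSup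
      show app (arr a b) a ≤ b
      rw [hadj]
end

section
/- Let (𝒜, ≼, →) be an implicative structure, with application a b := ⨅{c ∈ 𝒜 : a ≼ b → c} and abstraction λ(f) := ⨅_{a ∈ 𝒜} (a → f(a)) for any function f : 𝒜 → 𝒜. Then the interpretations of the linear combinators satisfy: λ(x ↦ x) = ⨅_{a}(a → a); λ(x ↦ λ(y ↦ λ(z ↦ x (y z)))) = ⨅_{a,b,c}((b → c) → (a → b) → a → c); and λ(x ↦ λ(y ↦ λ(z ↦ (x z) y))) = ⨅_{a,b,c}((a → b → c) → b → a → c). -/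
/-- interpretations of the linear combinators I, B, C in an
implicative structure. -/
theorem stmt_3 {α : Type*} [CompleteLattice α] (arr : α → α → α)
    (harr_mono : ∀ a a' b b' : α, a' ≤ a → b ≤ b' → arr a b ≤ arr a' b')
    (harr_inf : ∀ (a : α) (B : Set α), arr a (sInf B) = ⨅ b ∈ B, arr a b)
    (app : α → α → α)
    (happ : ∀ a b : α, app a b = sInf {c : α | a ≤ arr b c})
    (lam : (α → α) → α)
    (hlam : ∀ f : α → α, lam f = ⨅ a : α, arr a (f a)) :
    (lam (fun x => x) = ⨅ a : α, arr a a) ∧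
    (lam (fun x => lam (fun y => lam (fun z => app x (app y z)))) =
      ⨅ a : α, ⨅ b : α, ⨅ c : α, arr (arr b c) (arr (arr a b) (arr a c))) ∧
    (lam (fun x => lam (fun y => lam (fun z => app (app x z) y))) =
      ⨅ a : α, ⨅ b : α, ⨅ c : α, arr (arr a (arr b c)) (arr b (arr a c))) := by
  have arr_iInf : ∀ (a : α) (f : α → α),
      arr a (⨅ i, f i) = ⨅ i, arr a (f i) := by
    intro a f
    rw [iInf, harr_inf, iInf_range]
  have le_arr_app : ∀ a b : α, a ≤ arr b (app a b) := by
    intro a b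
    rw [happ, harr_inf]
    exact le_iInf₂ fun c hc => hc
  have adj1 : ∀ {a b c : α}, a ≤ arr b c → app a b ≤ c := by
    intro a b c h
    rw [happ]; exact sInf_le h
  have adj2 : ∀ {a b c : α}, app a b ≤ c → a ≤ arr b c := by
    intro a b c h
    exact (le_arr_app a b).trans (harr_mono _ _ _ _ le_rfl h)
  have lam3 : ∀ h : α → α → α → α,
      lam (fun x => lam (fun y => lam (fun z => h x y z))) =
        ⨅ x, ⨅ y, ⨅ z, arr x (arr y (arr z (h x y z))) := by
    intro h
    rw [hlam]
    refine iInf_congr fun x => ?_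
    rw [hlam, arr_iInf]
    refine iInf_congr fun y => ?_
    rw [hlam, arr_iInf, arr_iInf]
  refine ⟨hlam _, ?_, ?_⟩
  · rw [lam3]
    apply le_antisymm
    · refine le_iInf fun a => le_iInf fun b => le_iInf fun c => ?_
      refine iInf_le_of_le (arr b c) (iInf_le_of_le (arr a b) (iInf_le_of_le a ?_))
      have h1 : app (arr a b) a ≤ b := adj1 le_rfl
      have h2 : app (arr b c) (app (arr a b) a) ≤ c :=
        adj1 (harr_mono _ _ _ _ h1 le_rfl)
      exact harr_mono _ _ _ _ le_rfl (harr_mono _ _ _ _ le_rfl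
        (harr_mono _ _ _ _ le_rfl h2))
    · refine le_iInf fun x => le_iInf fun y => le_iInf fun z => ?_
      refine iInf_le_of_le z (iInf_le_of_le (app y z)
        (iInf_le_of_le (app x (app y z)) ?_))
      exact harr_mono _ _ _ _ (le_arr_app x (app y z))
        (harr_mono _ _ _ _ (le_arr_app y z) le_rfl)
  · rw [lam3]
    apply le_antisymm
    · refine le_iInf fun a => le_iInf fun b => le_iInf fun c => ?_
      refine iInf_le_of_le (arr a (arr b c)) (iInf_le_of_le b (iInf_le_of_le a ?_))
      have h1 : app (arr a (arr b c)) a ≤ arr b c := adj1 le_rfl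
      have h2 : app (app (arr a (arr b c)) a) b ≤ c := adj1 h1
      exact harr_mono _ _ _ _ le_rfl (harr_mono _ _ _ _ le_rfl
        (harr_mono _ _ _ _ le_rfl h2))
    · refine le_iInf fun x => le_iInf fun y => le_iInf fun z => ?_
      refine iInf_le_of_le z (iInf_le_of_le y
        (iInf_le_of_le (app (app x z) y) ?_))
      have hx : x ≤ arr z (arr y (app (app x z) y)) := adj2 (adj2 le_rfl)
      exact harr_mono _ _ _ _ hx le_rfl
end

section
/- Let (𝒜, ≼, →) be an implicative structure, with application a b := ⨅{c ∈ 𝒜 : a ≼ b → c} and abstraction λ(f) := ⨅_{a ∈ 𝒜} (a → f(a)). Then the interpretations of the non-linear combinators satisfy: λ(x ↦ λ(y ↦ x)) = ⨅_{a,b}(a → b → a); λ(x ↦ λ(y ↦ (x y) y)) = ⨅_{a,b}((a → a → b) → a → b); and λ(x ↦ λ(y ↦ λ(z ↦ (x z)(y z)))) = ⨅_{a,b,c}((a → b → c) → (a → b) → a → c). -/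
/-- interpretations of the non-linear combinators K, W, S in an
implicative structure. -/
theorem stmt_4 {α : Type*} [CompleteLattice α] (arr : α → α → α)
    (harr_mono : ∀ a a' b b' : α, a' ≤ a → b ≤ b' → arr a b ≤ arr a' b')
    (harr_inf : ∀ (a : α) (B : Set α), arr a (sInf B) = ⨅ b ∈ B, arr a b)
    (app : α → α → α)
    (happ : ∀ a b : α, app a b = sInf {c : α | a ≤ arr b c})
    (lam : (α → α) → α)
    (hlam : ∀ f : α → α, lam f = ⨅ a : α, arr a (f a)) :
    (lam (fun x => lam (fun _ => x)) = ⨅ a : α, ⨅ b : α, arr a (arr b a)) ∧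
    (lam (fun x => lam (fun y => app (app x y) y)) =
      ⨅ a : α, ⨅ b : α, arr (arr a (arr a b)) (arr a b)) ∧
    (lam (fun x => lam (fun y => lam (fun z => app (app x z) (app y z)))) =
      ⨅ a : α, ⨅ b : α, ⨅ c : α, arr (arr a (arr b c)) (arr (arr a b) (arr a c))) := by
  have harr_iInf : ∀ (a : α) (f : α → α), arr a (⨅ b, f b) = ⨅ b, arr a (f b) := by
    intro a f
    rw [iInf, harr_inf a (Set.range f), iInf_range]
  -- adjunction
  have hadj : ∀ a b c : α, app a b ≤ c ↔ a ≤ arr b c := by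
    intro a b c
    constructor
    · intro h
      have h1 : a ≤ arr b (app a b) := by
        rw [happ, harr_inf]
        exact le_iInf₂ fun d hd => hd
      exact h1.trans (harr_mono b b _ c le_rfl h)
    · intro h
      rw [happ]
      exact sInf_le h
  have hhalf : ∀ a b : α, a ≤ arr b (app a b) := fun a b => (hadj a b _).mp le_rfl
  have happ_mono : ∀ a a' b b' : α, a ≤ a' → b ≤ b' → app a b ≤ app a' b' := by
    intro a a' b b' ha hb
    rw [hadj]
    exact (ha.trans (hhalf a' b')).trans (harr_mono b' b _ _ hb le_rfl)
  refine ⟨?_, ?_, ?_⟩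
  · rw [hlam]
    simp only [hlam]
    exact iInf_congr fun a => harr_iInf a _
  · apply le_antisymm
    · refine le_iInf₂ fun a b => ?_
      rw [hlam]
      refine (iInf_le _ (arr a (arr a b))).trans ?_
      rw [hlam]
      refine (harr_mono _ _ _ _ le_rfl (iInf_le _ a)).trans ?_
      refine harr_mono _ _ _ _ le_rfl (harr_mono _ _ _ _ le_rfl ?_)
      rw [hadj, hadj]
    · simp only [hlam]
      refine le_iInf fun x => ?_
      rw [harr_iInf]
      refine le_iInf fun y => ?_
      set b := app (app x y) y with hb
      refine (iInf₂_le y b).trans (harr_mono _ _ _ _ ?_ le_rfl)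
      have h1 : app x y ≤ arr y b := (hadj _ _ _).mp le_rfl
      exact (hhalf x y).trans (harr_mono _ _ _ _ le_rfl h1)
  · apply le_antisymm
    · refine le_iInf fun a => le_iInf fun b => le_iInf fun c => ?_
      rw [hlam]
      refine (iInf_le _ (arr a (arr b c))).trans (harr_mono _ _ _ _ le_rfl ?_)
      rw [hlam]
      refine (iInf_le _ (arr a b)).trans (harr_mono _ _ _ _ le_rfl ?_)
      rw [hlam]
      refine (iInf_le _ a).trans (harr_mono _ _ _ _ le_rfl ?_)
      rw [hadj]
      have h1 : app (arr a b) a ≤ b := (hadj _ _ _).mpr le_rfl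
      have h2 : app (arr a (arr b c)) a ≤ arr b c := (hadj _ _ _).mpr le_rfl
      exact h2.trans (harr_mono _ _ _ _ h1 le_rfl)
    · simp only [hlam]
      refine le_iInf fun x => ?_
      rw [harr_iInf]
      refine le_iInf fun y => ?_
      rw [harr_iInf, harr_iInf]
      refine le_iInf fun z => ?_
      set t := app (app x z) (app y z) with ht
      refine (iInf_le _ z).trans ?_
      refine ((iInf_le _ (app y z)).trans ((iInf_le _ t).trans ?_))
      refine harr_mono _ _ _ _ ?_ (harr_mono _ _ _ _ ?_ le_rfl)
      · have h1 : app x z ≤ arr (app y z) t := (hadj _ _ _).mp le_rfl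
        exact (hhalf x z).trans (harr_mono _ _ _ _ le_rfl h1)
      · exact hhalf y z
end

section
/- For every linear λ-term t there exists a linear combinatory term t₀ such that t₀ β-reduces (in finitely many steps) to t. -/
/-! Bracket abstraction. If the variable `0` occurs exactly once in a combinatory term `M`, then
`λ.M` is a β-reduct of the combinatory term `[M]` given by `[0] = I`, `[a b] = C [a] b` when the
variable occurs in `a`, and `[a b] = B a [b]` when it occurs in `b` (with the indices of the
other factor lowered); linearity is what guarantees that exactly one case applies at every node.
Replacing the abstractions of a linear term by bracket abstraction from the inside out yields a
combinatory term with the same variable counts, hence linear, which reduces back to the term. -/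

/-- Untyped λ-terms with de Bruijn indices. -/
inductive Tm : Type
  | var : ℕ → Tm
  | app : Tm → Tm → Tm
  | lam : Tm → Tm

namespace Tm

/-- Number of occurrences of the variable with de Bruijn index `k` in a term. -/
def count (k : ℕ) : Tm → ℕ
  | var n => if n = k then 1 else 0
  | app t u => count k t + count k u
  | lam t => count (k + 1) t

/-- Auxiliary structural condition: every abstraction binds exactly one occurrence. -/
inductive LinearAux : Tm → Prop
  | var (n : ℕ) : LinearAux (var n)
  | app {t u : Tm} : LinearAux t → LinearAux u → LinearAux (t.app u)
  | lam {t : Tm} : LinearAux t → count 0 t = 1 → LinearAux (lam t)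

/-- A linear λ-term: every abstraction binds exactly one occurrence of its variable
and every free variable occurs at most once. -/
def Linear (t : Tm) : Prop := LinearAux t ∧ ∀ n : ℕ, count n t ≤ 1

/-- Shift (lift) the free variables with index `≥ c` by one. -/
def shift (c : ℕ) : Tm → Tm
  | var n => if n < c then var n else var (n + 1)
  | app t u => app (shift c t) (shift c u)
  | lam t => lam (shift (c + 1) t)

/-- Capture-avoiding substitution of `u` for the variable of index `k` in a term. -/
def subst : Tm → ℕ → Tm → Tm
  | var n, k, u => if n = k then u else if k < n then var (n - 1) else var n
  | app a b, k, u => app (subst a k u) (subst b k u)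
  | lam a, k, u => lam (subst a (k + 1) (shift 0 u))

/-- One-step β-reduction (congruence closure of the β-rule). -/
inductive Step : Tm → Tm → Prop
  | beta (t u : Tm) : Step (app (lam t) u) (subst t 0 u)
  | appl {t t' : Tm} (u : Tm) : Step t t' → Step (app t u) (app t' u)
  | appr (t : Tm) {u u' : Tm} : Step u u' → Step (app t u) (app t u')
  | lam {t t' : Tm} : Step t t' → Step (lam t) (lam t')

/-- β-reduction in finitely many steps. -/
def Red : Tm → Tm → Prop := Relation.ReflTransGen Step

/-- The combinator I = λx.x. -/
def Icomb : Tm := lam (var 0)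

/-- The combinator B = λxyz.x(yz). -/
def Bcomb : Tm := lam (lam (lam (app (var 2) (app (var 1) (var 0)))))

/-- The combinator C = λxyz.xzy. -/
def Ccomb : Tm := lam (lam (lam (app (app (var 2) (var 0)) (var 1))))

/-- Linear combinatory terms: B, C, I, free variables, and applications thereof. -/
inductive Combinatory : Tm → Prop
  | I : Combinatory Icomb
  | B : Combinatory Bcomb
  | C : Combinatory Ccomb
  | var (n : ℕ) : Combinatory (var n)
  | app {t u : Tm} : Combinatory t → Combinatory u → Combinatory (t.app u)

end Tm

namespace Tm

@[simp] lemma subst_Icomb (k : ℕ) (u : Tm) : subst Icomb k u = Icomb := by simp [Icomb, subst]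

@[simp] lemma subst_Bcomb (k : ℕ) (u : Tm) : subst Bcomb k u = Bcomb := by simp [Bcomb, subst]

@[simp] lemma subst_Ccomb (k : ℕ) (u : Tm) : subst Ccomb k u = Ccomb := by simp [Ccomb, subst]

lemma subst_shift (t : Tm) (c : ℕ) (u : Tm) : subst (shift c t) c u = t := by
  induction t generalizing c u with
  | var n =>
    by_cases h : n < c
    · simp [shift, subst, h, h.ne, h.not_gt]
    · simp [shift, subst, h, show n + 1 ≠ c by omega, show c < n + 1 by omega]
  | app a b iha ihb => simp [shift, subst, iha, ihb]
  | lam a ih => simp [shift, subst, ih]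

lemma subst_shift_succ_var (t : Tm) (c : ℕ) : subst (shift (c + 1) t) c (var c) = t := by
  induction t generalizing c with
  | var n =>
    by_cases h : n < c + 1
    · by_cases h' : n = c
      · simp [shift, subst, h']
      · simp [shift, subst, h, h', show ¬ c < n by omega]
    · simp [shift, subst, h, show n + 1 ≠ c by omega, show c < n + 1 by omega]
  | app a b iha ihb => simp [shift, subst, iha, ihb]
  | lam a ih => simp [shift, subst, ih]

lemma shift_shift (t : Tm) (c : ℕ) : shift c (shift c t) = shift (c + 1) (shift c t) := by
  induction t generalizing c with
  | var n =>
    by_cases h : n < c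
    · simp [shift, h, show n < c + 1 by omega]
    · simp [shift, h, show ¬ n + 1 < c by omega]
  | app a b iha ihb => simp [shift, iha, ihb]
  | lam a ih => simp [shift, ih]

lemma shift_subst_of_count_eq_zero {t : Tm} {j : ℕ} (h : count j t = 0) (u : Tm) :
    shift j (subst t j u) = t := by
  induction t generalizing j u with
  | var n =>
    simp only [count, ite_eq_right_iff, one_ne_zero, imp_false] at h
    by_cases hjn : j < n
    · simp [subst, shift, h, hjn, show ¬ n - 1 < j by omega, show n - 1 + 1 = n by omega]
    · simp [subst, shift, h, hjn, show n < j by omega]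
  | app a b iha ihb =>
    simp only [count, Nat.add_eq_zero_iff] at h
    simp [subst, shift, iha h.1, ihb h.2]
  | lam a ih => simp [subst, shift, ih (j := j + 1) h]

lemma count_succ_shift (t : Tm) {j k : ℕ} (hjk : j ≤ k) :
    count (k + 1) (shift j t) = count k t := by
  induction t generalizing j k with
  | var n =>
    by_cases h : n < j
    · simp [shift, count, h, show n ≠ k + 1 by omega, show n ≠ k by omega]
    · simp [shift, count, h]
  | app a b iha ihb => simp [shift, count, iha hjk, ihb hjk]
  | lam a ih => simp [shift, count, ih (Nat.succ_le_succ hjk)]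

lemma count_subst_of_count_eq_zero {t : Tm} (h : count 0 t = 0) (k : ℕ) (u : Tm) :
    count k (subst t 0 u) = count (k + 1) t := by
  conv_rhs => rw [← shift_subst_of_count_eq_zero h u]
  exact (count_succ_shift _ k.zero_le).symm


lemma Red.app_left {t t' : Tm} (u : Tm) (h : Red t t') : Red (app t u) (app t' u) :=
  h.lift (fun x => app x u) fun _ _ => Step.appl u

lemma Red.app_right (t : Tm) {u u' : Tm} (h : Red u u') : Red (app t u) (app t u') :=
  h.lift (app t) fun _ _ => Step.appr t

lemma Red.lam {t t' : Tm} (h : Red t t') : Red (lam t) (lam t') :=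
  h.lift Tm.lam fun _ _ => Step.lam

lemma red_Ccomb_lam (a q : Tm) : Red (app (app Ccomb (lam a)) q) (lam (app a (shift 0 q))) := by
  have h₁ : Step (app Ccomb (lam a))
      (lam (lam (app (app (lam (shift 1 (shift 1 a))) (var 0)) (var 1)))) := by
    simpa [subst, shift, Ccomb] using
      Step.beta (lam (lam (app (app (var 2) (var 0)) (var 1)))) (lam a)
  have h₂ : Step (app (lam (lam (app (app (lam (shift 1 (shift 1 a))) (var 0)) (var 1)))) q)
      (lam (app (app (lam (shift 1 a)) (var 0)) (shift 0 q))) := by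
    simpa [subst, shift_shift, subst_shift] using
      Step.beta (lam (app (app (lam (shift 1 (shift 1 a))) (var 0)) (var 1))) q
  have h₃ : Step (lam (app (app (lam (shift 1 a)) (var 0)) (shift 0 q)))
      (lam (app a (shift 0 q))) := by
    simpa [subst_shift_succ_var] using Step.lam (Step.appl _ (Step.beta (shift 1 a) (var 0)))
  exact .head (Step.appl q h₁) (.head h₂ (.single h₃))

lemma red_Bcomb_lam (p b : Tm) : Red (app (app Bcomb p) (lam b)) (lam (app (shift 0 p) b)) := by
  have h₁ : Step (app Bcomb p) (lam (lam (app (shift 1 (shift 0 p)) (app (var 1) (var 0))))) := by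
    simpa [subst, shift, shift_shift, Bcomb] using
      Step.beta (lam (lam (app (var 2) (app (var 1) (var 0))))) p
  have h₂ : Step (app (lam (lam (app (shift 1 (shift 0 p)) (app (var 1) (var 0))))) (lam b))
      (lam (app (shift 0 p) (app (lam (shift 1 b)) (var 0)))) := by
    simpa [subst, shift, subst_shift] using
      Step.beta (lam (app (shift 1 (shift 0 p)) (app (var 1) (var 0)))) (lam b)
  have h₃ : Step (lam (app (shift 0 p) (app (lam (shift 1 b)) (var 0))))
      (lam (app (shift 0 p) b)) := by
    simpa [subst_shift_succ_var] using Step.lam (Step.appr _ (Step.beta (shift 1 b) (var 0)))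
  exact .head (Step.appl _ h₁) (.head h₂ (.single h₃))


lemma Combinatory.subst {t : Tm} (ht : Combinatory t) {u : Tm} (hu : Combinatory u) (k : ℕ) :
    Combinatory (t.subst k u) := by
  induction ht with
  | I => simpa using Combinatory.I
  | B => simpa using Combinatory.B
  | C => simpa using Combinatory.C
  | var n =>
    simp only [Tm.subst]
    split_ifs
    exacts [hu, .var _, .var _]
  | app _ _ iht ihu => exact .app iht ihu

lemma Combinatory.linearAux {t : Tm} (ht : Combinatory t) : LinearAux t := by
  induction ht with
  | I => exact .lam (.var 0) (by simp [count])
  | B => exact .lam (.lam (.lam (.app (.var 2) (.app (.var 1) (.var 0))) (by simp [count]))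
      (by simp [count])) (by simp [count])
  | C => exact .lam (.lam (.lam (.app (.app (.var 2) (.var 0)) (.var 1)) (by simp [count]))
      (by simp [count])) (by simp [count])
  | var n => exact .var n
  | app _ _ iht ihu => exact .app iht ihu

variable {t : Tm}

/-- BCI bracket abstraction of the variable `0`, intended for combinatory terms in which it
occurs exactly once; `subst t 0 (var 0)` lowers the indices of a subterm `t` in which `0` does
not occur. -/
def bracketAbs : Tm → Tm
  | var _ => Icomb
  | app a b =>
    if count 0 a = 1 then app (app Ccomb (bracketAbs a)) (subst b 0 (var 0))
    else app (app Bcomb (subst a 0 (var 0))) (bracketAbs b)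
  | lam _ => Icomb

lemma Combinatory.bracketAbs (ht : Combinatory t) (h : count 0 t = 1) :
    Combinatory (bracketAbs t) := by
  induction ht with
  | I | B | C => simp [Icomb, Bcomb, Ccomb, count] at h
  | var n => exact .I
  | @app a b ha hb iha ihb =>
    simp only [count] at h
    by_cases hc : count 0 a = 1
    · simpa [Tm.bracketAbs, hc] using .app (.app .C (iha hc)) (hb.subst (.var 0) 0)
    · simpa [Tm.bracketAbs, hc] using .app (.app .B (ha.subst (.var 0) 0)) (ihb (by omega))

lemma count_bracketAbs (ht : Combinatory t) (h : count 0 t = 1) (k : ℕ) :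
    count k (bracketAbs t) = count (k + 1) t := by
  induction ht generalizing k with
  | I | B | C => simp [Icomb, Bcomb, Ccomb, count] at h
  | var n =>
    simp only [count, ite_eq_left_iff, zero_ne_one, imp_false, not_not] at h
    simp [bracketAbs, Icomb, count, h]
  | @app a b _ _ iha ihb =>
    simp only [count] at h
    by_cases hc : count 0 a = 1
    · simp [bracketAbs, hc, count, Ccomb, iha hc,
        count_subst_of_count_eq_zero (show count 0 b = 0 by omega)]
    · simp [bracketAbs, hc, count, Bcomb, ihb (show count 0 b = 1 by omega),
        count_subst_of_count_eq_zero (show count 0 a = 0 by omega)]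

lemma bracketAbs_red (ht : Combinatory t) (h : count 0 t = 1) : Red (bracketAbs t) (lam t) := by
  induction ht with
  | I | B | C => simp [Icomb, Bcomb, Ccomb, count] at h
  | var n =>
    simp only [count, ite_eq_left_iff, zero_ne_one, imp_false, not_not] at h
    subst h
    exact .refl
  | @app a b _ _ iha ihb =>
    simp only [count] at h
    by_cases hc : count 0 a = 1
    · have hb := shift_subst_of_count_eq_zero (show count 0 b = 0 by omega) (var 0)
      have hC := red_Ccomb_lam a (subst b 0 (var 0))
      rw [hb] at hC
      rw [bracketAbs, if_pos hc]
      exact (Red.app_left _ (Red.app_right _ (iha hc))).trans hC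
    · have ha := shift_subst_of_count_eq_zero (show count 0 a = 0 by omega) (var 0)
      have hB := red_Bcomb_lam (subst a 0 (var 0)) b
      rw [ha] at hB
      rw [bracketAbs, if_neg hc]
      exact (Red.app_right _ (ihb (by omega))).trans hB

def toCombinatory : Tm → Tm
  | var n => var n
  | app a b => app (toCombinatory a) (toCombinatory b)
  | lam a => bracketAbs (toCombinatory a)

lemma LinearAux.combinatory_toCombinatory_and_count (ht : LinearAux t) :
    Combinatory (toCombinatory t) ∧ ∀ k, count k (toCombinatory t) = count k t := by
  induction ht with
  | var n => exact ⟨.var n, fun _ => rfl⟩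
  | app _ _ iha ihb =>
    exact ⟨.app iha.1 ihb.1, fun k => by simp [toCombinatory, count, iha.2 k, ihb.2 k]⟩
  | lam _ h ih =>
    have h' := (ih.2 0).trans h
    exact ⟨ih.1.bracketAbs h', fun k => by
      rw [toCombinatory, count_bracketAbs ih.1 h' k, ih.2 (k + 1)]; rfl⟩

lemma LinearAux.toCombinatory_red (ht : LinearAux t) : Red (toCombinatory t) t := by
  induction ht with
  | var n => exact .refl
  | app _ _ iha ihb => exact (Red.app_left _ iha).trans (Red.app_right _ ihb)
  | lam ha h ih =>
    obtain ⟨hc, hcount⟩ := ha.combinatory_toCombinatory_and_count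
    exact (bracketAbs_red hc ((hcount 0).trans h)).trans (Red.lam ih)

end Tm

/-- for each linear λ-term `t` there is a linear combinatory term `t₀`
that β-reduces to `t`. -/
theorem stmt_5 (t : Tm) (ht : Tm.Linear t) :
    ∃ t₀ : Tm, Tm.Combinatory t₀ ∧ Tm.Linear t₀ ∧ Tm.Red t₀ t := by
  obtain ⟨hcomb, hcount⟩ := ht.1.combinatory_toCombinatory_and_count
  exact ⟨t.toCombinatory, hcomb, ⟨hcomb.linearAux, fun n => hcount n ▸ ht.2 n⟩,
    ht.1.toCombinatory_red⟩
end

section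
/- Let (𝒜, ≼, →) be an implicative structure and S ⊆ 𝒜 a linear separator. Then: (1) if a' ⊢_S a and b ⊢_S b', then (a → b) ⊢_S (a' → b'); (2) if a ⊢_S a' and b ⊢_S b', then (a ⊗ b) ⊢_S (a' ⊗ b'). Consequently, → and ⊗ induce well-defined operations on the quotient of 𝒜 by the equivalence ≡_S. -/
/-! STATEMENT 7: entailment is preserved by `→` (contravariantly/covariantly) and by `⊗`,
so both operations descend to the quotient of `𝒜` by `≡_S`. -/

/-- A linear separator for an implication `arr` on a complete lattice. -/
def LinSep {α : Type*} [CompleteLattice α] (arr : α → α → α) (S : Set α) : Prop :=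
  (∀ a b : α, a ∈ S → a ≤ b → b ∈ S) ∧
  ((⨅ a : α, arr a a) ∈ S) ∧
  ((⨅ a : α, ⨅ b : α, ⨅ c : α, arr (arr b c) (arr (arr a b) (arr a c))) ∈ S) ∧
  ((⨅ a : α, ⨅ b : α, ⨅ c : α, arr (arr a (arr b c)) (arr b (arr a c))) ∈ S) ∧
  (∀ a b : α, a ∈ S → arr a b ∈ S → b ∈ S)

/-- The tensor product `a ⊗ b := ⨅_c ((a → b → c) → c)`. -/
def tens {α : Type*} [CompleteLattice α] (arr : α → α → α) (a b : α) : α :=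
  ⨅ c : α, arr (arr a (arr b c)) c

/-- Entailment `a ⊢_S b`. -/
def ent {α : Type*} [CompleteLattice α] (arr : α → α → α) (S : Set α) (a b : α) : Prop :=
  arr a b ∈ S

/-- Equivalence `a ≡_S b`. -/
def equivS {α : Type*} [CompleteLattice α] (arr : α → α → α) (S : Set α) (a b : α) : Prop :=
  ent arr S a b ∧ ent arr S b a

theorem stmt_7 {α : Type*} [CompleteLattice α] (arr : α → α → α)
    (harr_mono : ∀ a a' b b' : α, a' ≤ a → b ≤ b' → arr a b ≤ arr a' b')
    (harr_inf : ∀ (a : α) (B : Set α), arr a (sInf B) = ⨅ b ∈ B, arr a b)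
    (S : Set α) (hS : LinSep arr S) :
    (∀ a a' b b' : α, ent arr S a' a → ent arr S b b' →
      ent arr S (arr a b) (arr a' b')) ∧
    (∀ a a' b b' : α, ent arr S a a' → ent arr S b b' →
      ent arr S (tens arr a b) (tens arr a' b')) ∧
    (∃ arrQ : Quot (equivS arr S) → Quot (equivS arr S) → Quot (equivS arr S),
      ∀ a b : α, arrQ (Quot.mk _ a) (Quot.mk _ b) = Quot.mk _ (arr a b)) ∧
    (∃ tensQ : Quot (equivS arr S) → Quot (equivS arr S) → Quot (equivS arr S),
      ∀ a b : α, tensQ (Quot.mk _ a) (Quot.mk _ b) = Quot.mk _ (tens arr a b)) := by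
  obtain ⟨hup, hI, hBmem, hCmem, hmp⟩ := hS
  -- the combinators
  set Iel : α := ⨅ a : α, arr a a with hIel
  set Bel : α := ⨅ a : α, ⨅ b : α, ⨅ c : α, arr (arr b c) (arr (arr a b) (arr a c)) with hBel
  set Cel : α := ⨅ a : α, ⨅ b : α, ⨅ c : α, arr (arr a (arr b c)) (arr b (arr a c)) with hCel
  have hB : ∀ a b c : α, Bel ≤ arr (arr b c) (arr (arr a b) (arr a c)) := by
    intro a b c
    exact le_trans (iInf_le _ a) (le_trans (iInf_le _ b) (iInf_le _ c))
  have hC : ∀ a b c : α, Cel ≤ arr (arr a (arr b c)) (arr b (arr a c)) := by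
    intro a b c
    exact le_trans (iInf_le _ a) (le_trans (iInf_le _ b) (iInf_le _ c))
  -- application
  let app : α → α → α := fun a b => sInf {c | a ≤ arr b c}
  have le_arr_app : ∀ a b : α, a ≤ arr b (app a b) := by
    intro a b
    rw [show app a b = sInf {c | a ≤ arr b c} from rfl, harr_inf]
    exact le_iInf₂ fun c hc => hc
  have app_le : ∀ {a b x y : α}, a ≤ arr x y → b ≤ x → app a b ≤ y := by
    intro a b x y ha hb
    exact sInf_le (ha.trans (harr_mono _ _ _ _ hb le_rfl))
  have app_mem : ∀ {a b : α}, a ∈ S → b ∈ S → app a b ∈ S := by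
    intro a b ha hb
    exact hmp b (app a b) hb (hup a _ ha (le_arr_app a b))
  -- forward composition combinator t1 = C B
  set t1 : α := app Cel Bel with ht1def
  have ht1 : ∀ x y w : α, t1 ≤ arr (arr x y) (arr (arr y w) (arr x w)) := by
    intro x y w
    exact app_le (hC (arr y w) (arr x y) (arr x w)) (hB x y w)
  have ht1mem : t1 ∈ S := app_mem hCmem hBmem
  -- part 1
  have part1 : ∀ a a' b b' : α, ent arr S a' a → ent arr S b b' →
      ent arr S (arr a b) (arr a' b') := by
    intro a a' b b' hf hg
    have hu : app t1 (arr a' a) ≤ arr (arr a b) (arr a' b) :=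
      app_le (ht1 a' a b) le_rfl
    have humem : app t1 (arr a' a) ∈ S := app_mem ht1mem hf
    have hv : app Bel (arr b b') ≤ arr (arr a' b) (arr a' b') :=
      app_le (hB a' b b') le_rfl
    have hvmem : app Bel (arr b b') ∈ S := app_mem hBmem hg
    have he : app (app Bel (app Bel (arr b b'))) (app t1 (arr a' a)) ≤
        arr (arr a b) (arr a' b') :=
      app_le (app_le (hB (arr a b) (arr a' b) (arr a' b')) hv) hu
    exact hup _ _ (app_mem (app_mem hBmem hvmem) humem) he
  -- part 2
  have part2 : ∀ a a' b b' : α, ent arr S a a' → ent arr S b b' →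
      ent arr S (tens arr a b) (tens arr a' b') := by
    intro a a' b b' hf hg
    set w1 : α := app Bel (app t1 (arr b b')) with hw1def
    set m : α := app (app Bel w1) (app t1 (arr a a')) with hmdef
    set e : α := app t1 m with hedef
    have hmem : e ∈ S :=
      app_mem ht1mem (app_mem (app_mem hBmem (app_mem hBmem (app_mem ht1mem hg)))
        (app_mem ht1mem hf))
    have hbound : ∀ c : α, e ≤ arr (tens arr a b) (arr (arr a' (arr b' c)) c) := by
      intro c
      have hu : app t1 (arr b b') ≤ arr (arr b' c) (arr b c) :=
        app_le (ht1 b b' c) le_rfl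
      have hw1 : w1 ≤ arr (arr a (arr b' c)) (arr a (arr b c)) :=
        app_le (hB a (arr b' c) (arr b c)) hu
      have hf1 : app t1 (arr a a') ≤ arr (arr a' (arr b' c)) (arr a (arr b' c)) :=
        app_le (ht1 a a' (arr b' c)) le_rfl
      have hm : m ≤ arr (arr a' (arr b' c)) (arr a (arr b c)) :=
        app_le (app_le (hB (arr a' (arr b' c)) (arr a (arr b' c)) (arr a (arr b c))) hw1) hf1
      have he : e ≤ arr (arr (arr a (arr b c)) c) (arr (arr a' (arr b' c)) c) :=
        app_le (ht1 (arr a' (arr b' c)) (arr a (arr b c)) c) hm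
      exact he.trans (harr_mono _ _ _ _ (iInf_le _ c) le_rfl)
    have hrw : arr (tens arr a b) (tens arr a' b') =
        ⨅ c : α, arr (tens arr a b) (arr (arr a' (arr b' c)) c) := by
      have h : tens arr a' b' = sInf (Set.range fun c => arr (arr a' (arr b' c)) c) := rfl
      rw [h, harr_inf, iInf_range]
    refine hup e _ hmem ?_
    rw [hrw]
    exact le_iInf hbound
  -- reflexivity of entailment
  have hrefl : ∀ a : α, ent arr S a a := fun a => hup Iel _ hI (iInf_le _ a)
  refine ⟨part1, part2, ?_, ?_⟩
  · refine ⟨Quot.map₂ arr ?_ ?_, fun a b => rfl⟩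
    · intro a b₁ b₂ hb
      exact ⟨part1 a a b₁ b₂ (hrefl a) hb.1, part1 a a b₂ b₁ (hrefl a) hb.2⟩
    · intro a₁ a₂ b ha
      exact ⟨part1 a₁ a₂ b b ha.2 (hrefl b), part1 a₂ a₁ b b ha.1 (hrefl b)⟩
  · refine ⟨Quot.map₂ (tens arr) ?_ ?_, fun a b => rfl⟩
    · intro a b₁ b₂ hb
      exact ⟨part2 a a b₁ b₂ (hrefl a) hb.1, part2 a a b₂ b₁ (hrefl a) hb.2⟩
    · intro a₁ a₂ b ha
      exact ⟨part2 a₁ a₂ b b ha.1 (hrefl b), part2 a₂ a₁ b b ha.2 (hrefl b)⟩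
end

section
/- Let (𝒜, ≼, →) be an implicative structure and S ⊆ 𝒜 a linear separator. Then for all a, b, c ∈ 𝒜: (1) a ⊗ b ≡_S b ⊗ a (commutativity); (2) (a ⊗ b) ⊗ c ≡_S a ⊗ (b ⊗ c) (associativity); (3) a ⊗ I^𝒜 ≡_S a (the identity combinator is a unit for ⊗); (4) (a ⊗ b) → c ≡_S a → (b → c) (currying). -/
namespace Stmt8Aux
set_option linter.unusedSectionVars false

variable {α : Type*} [CompleteLattice α] (arr : α → α → α)

/-- semantic application -/
def app (a b : α) : α := sInf {c | a ≤ arr b c}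

def Ic : α := ⨅ a : α, arr a a
def Bc : α := ⨅ a : α, ⨅ b : α, ⨅ c : α, arr (arr b c) (arr (arr a b) (arr a c))
def Cc : α := ⨅ a : α, ⨅ b : α, ⨅ c : α, arr (arr a (arr b c)) (arr b (arr a c))

def pairc : α := app arr (app arr (Bc arr) (Cc arr)) (app arr (Cc arr) (Ic arr))

lemma I_le (x : α) : Ic arr ≤ arr x x := iInf_le _ x

lemma B_le (x y z : α) :
    Bc arr ≤ arr (arr y z) (arr (arr x y) (arr x z)) :=
  le_trans (iInf_le _ x) (le_trans (iInf_le _ y) (iInf_le _ z))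

lemma C_le (x y z : α) :
    Cc arr ≤ arr (arr x (arr y z)) (arr y (arr x z)) :=
  le_trans (iInf_le _ x) (le_trans (iInf_le _ y) (iInf_le _ z))

lemma tens_le (x y z : α) : tens arr x y ≤ arr (arr x (arr y z)) z := iInf_le _ z

section
variable (harr_mono : ∀ a a' b b' : α, a' ≤ a → b ≤ b' → arr a b ≤ arr a' b')
variable (harr_inf : ∀ (a : α) (B : Set α), arr a (sInf B) = ⨅ b ∈ B, arr a b)
variable {S : Set α} (hS : LinSep arr S)

include harr_mono in
lemma app_le {a b x y : α} (h1 : a ≤ arr x y) (h2 : b ≤ x) : app arr a b ≤ y :=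
  sInf_le (le_trans h1 (harr_mono x b y y h2 le_rfl))

include harr_inf in
lemma arr_iInf {ι : Sort*} (a : α) (f : ι → α) :
    arr a (⨅ i, f i) = ⨅ i, arr a (f i) := by
  rw [iInf, harr_inf, iInf_range]

include harr_inf in
lemma le_arr_app (a b : α) : a ≤ arr b (app arr a b) := by
  rw [app, harr_inf]
  exact le_iInf₂ fun c hc => hc

include harr_mono harr_inf in
/-- pairing: `pairc ≤ a → b → a ⊗ b` -/
lemma pair_le (a b : α) : pairc arr ≤ arr a (arr b (tens arr a b)) := by
  rw [tens, arr_iInf arr harr_inf, arr_iInf arr harr_inf]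
  refine le_iInf fun c => ?_
  set G := arr a (arr b c) with hG
  have hCI : app arr (Cc arr) (Ic arr) ≤ arr a (arr G (arr b c)) :=
    app_le arr harr_mono (C_le arr G a (arr b c)) (I_le arr G)
  have hBC : app arr (Bc arr) (Cc arr) ≤
      arr (arr a (arr G (arr b c))) (arr a (arr b (arr G c))) :=
    app_le arr harr_mono (B_le arr a (arr G (arr b c)) (arr b (arr G c)))
      (C_le arr G b c)
  exact app_le arr harr_mono hBC hCI

include hS in
lemma mem_of_le {x y : α} (hx : x ∈ S) (h : x ≤ y) : y ∈ S := hS.1 x y hx h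

include harr_inf hS in
lemma app_mem {a b : α} (ha : a ∈ S) (hb : b ∈ S) : app arr a b ∈ S :=
  hS.2.2.2.2 b (app arr a b) hb
    (mem_of_le arr hS ha (le_arr_app arr harr_inf a b))

include hS in
lemma I_mem : Ic arr ∈ S := hS.2.1
include hS in
lemma B_mem : Bc arr ∈ S := hS.2.2.1
include hS in
lemma C_mem : Cc arr ∈ S := hS.2.2.2.1

include harr_mono harr_inf hS in
lemma pair_mem : pairc arr ∈ S :=
  app_mem arr harr_inf hS
    (app_mem arr harr_inf hS (B_mem arr hS) (C_mem arr hS))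
    (app_mem arr harr_inf hS (C_mem arr hS) (I_mem arr hS))

include harr_mono harr_inf hS in
/-- curry, first direction: `((a ⊗ b) → c) ⊢ (a → b → c)` -/
lemma curry1 (a b c : α) : ent arr S (arr (tens arr a b) c) (arr a (arr b c)) := by
  set M := tens arr a b with hM
  set Q1 := arr b M with hQ1
  set Q2 := arr b c with hQ2
  set H1 := arr M c with hH1
  have hpair : pairc arr ≤ arr a Q1 := by
    have := pair_le arr harr_mono harr_inf a b; rwa [← hM, ← hQ1] at this
  have hBBB : app arr (app arr (Bc arr) (Bc arr)) (Bc arr) ≤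
      arr H1 (arr (arr a Q1) (arr a Q2)) :=
    app_le arr harr_mono
      (app_le arr harr_mono
        (B_le arr H1 (arr Q1 Q2) (arr (arr a Q1) (arr a Q2)))
        (B_le arr a Q1 Q2))
      (B_le arr b M c)
  have hfinal : app arr (app arr (Cc arr) (app arr (app arr (Bc arr) (Bc arr)) (Bc arr)))
      (pairc arr) ≤ arr H1 (arr a Q2) :=
    app_le arr harr_mono
      (app_le arr harr_mono (C_le arr H1 (arr a Q1) (arr a Q2)) hBBB) hpair
  have hmem : app arr (app arr (Cc arr) (app arr (app arr (Bc arr) (Bc arr)) (Bc arr)))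
      (pairc arr) ∈ S :=
    app_mem arr harr_inf hS
      (app_mem arr harr_inf hS (C_mem arr hS)
        (app_mem arr harr_inf hS
          (app_mem arr harr_inf hS (B_mem arr hS) (B_mem arr hS)) (B_mem arr hS)))
      (pair_mem arr harr_mono harr_inf hS)
  exact mem_of_le arr hS hmem hfinal

include harr_mono harr_inf hS in
/-- curry, second direction: `(a → b → c) ⊢ ((a ⊗ b) → c)` -/
lemma curry2 (a b c : α) : ent arr S (arr a (arr b c)) (arr (tens arr a b) c) := by
  set M := tens arr a b with hM
  set G := arr a (arr b c) with hG
  have hI : Ic arr ≤ arr M (arr G c) :=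
    le_trans (I_le arr M)
      (harr_mono M M M (arr G c) le_rfl (tens_le arr a b c))
  have hfinal : app arr (Cc arr) (Ic arr) ≤ arr G (arr M c) :=
    app_le arr harr_mono (C_le arr M G c) hI
  exact mem_of_le arr hS
    (app_mem arr harr_inf hS (C_mem arr hS) (I_mem arr hS)) hfinal

include harr_mono harr_inf hS in
/-- adjunction: from `a ⊢ (b → c)` deduce `(a ⊗ b) ⊢ c` -/
lemma adj2 (a b c : α) (h : ent arr S a (arr b c)) : ent arr S (tens arr a b) c :=
  hS.2.2.2.2 _ _ h (curry2 arr harr_mono harr_inf hS a b c)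

include harr_mono harr_inf hS in
lemma comm (a b : α) : ent arr S (tens arr a b) (tens arr b a) := by
  refine adj2 arr harr_mono harr_inf hS a b (tens arr b a) ?_
  have hle : app arr (Cc arr) (pairc arr) ≤ arr a (arr b (tens arr b a)) :=
    app_le arr harr_mono (C_le arr b a (tens arr b a))
      (pair_le arr harr_mono harr_inf b a)
  exact mem_of_le arr hS
    (app_mem arr harr_inf hS (C_mem arr hS)
      (pair_mem arr harr_mono harr_inf hS)) hle

include harr_mono harr_inf hS in
lemma assoc1 (a b c : α) :
    ent arr S (tens arr (tens arr a b) c) (tens arr a (tens arr b c)) := by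
  set U := tens arr b c with hU
  set T := tens arr a U with hT
  refine adj2 arr harr_mono harr_inf hS _ _ _
    (adj2 arr harr_mono harr_inf hS a b (arr c T) ?_)
  -- need : arr a (arr b (arr c T)) ∈ S, realized by λx y z. pair x (pair y z)
  set A1 := arr U T with hA1
  set R1 := arr (arr c U) (arr c T) with hR1
  set R2 := arr (arr b (arr c U)) (arr b (arr c T)) with hR2
  have hp2 : pairc arr ≤ arr a A1 := pair_le arr harr_mono harr_inf a U
  have hp1 : pairc arr ≤ arr b (arr c U) := pair_le arr harr_mono harr_inf b c
  have s1 : app arr (app arr (Bc arr) (Bc arr)) (pairc arr) ≤ arr a R1 :=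
    app_le arr harr_mono
      (app_le arr harr_mono (B_le arr a A1 R1) (B_le arr c U T)) hp2
  have s2 : app arr (app arr (Bc arr) (Bc arr))
      (app arr (app arr (Bc arr) (Bc arr)) (pairc arr)) ≤ arr a R2 :=
    app_le arr harr_mono
      (app_le arr harr_mono (B_le arr a R1 R2)
        (B_le arr b (arr c U) (arr c T))) s1
  have hfinal : app arr (app arr (Cc arr)
      (app arr (app arr (Bc arr) (Bc arr))
        (app arr (app arr (Bc arr) (Bc arr)) (pairc arr)))) (pairc arr) ≤
      arr a (arr b (arr c T)) :=
    app_le arr harr_mono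
      (app_le arr harr_mono
        (C_le arr a (arr b (arr c U)) (arr b (arr c T))) s2) hp1
  have hBB : app arr (Bc arr) (Bc arr) ∈ S :=
    app_mem arr harr_inf hS (B_mem arr hS) (B_mem arr hS)
  have hmem : app arr (app arr (Cc arr)
      (app arr (app arr (Bc arr) (Bc arr))
        (app arr (app arr (Bc arr) (Bc arr)) (pairc arr)))) (pairc arr) ∈ S :=
    app_mem arr harr_inf hS
      (app_mem arr harr_inf hS (C_mem arr hS)
        (app_mem arr harr_inf hS hBB
          (app_mem arr harr_inf hS hBB (pair_mem arr harr_mono harr_inf hS))))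
      (pair_mem arr harr_mono harr_inf hS)
  exact mem_of_le arr hS hmem hfinal

include harr_mono harr_inf hS in
lemma assoc2 (a b c : α) :
    ent arr S (tens arr a (tens arr b c)) (tens arr (tens arr a b) c) := by
  set U := tens arr b c with hU
  set T := tens arr (tens arr a b) c with hT
  refine adj2 arr harr_mono harr_inf hS a U T ?_
  -- need : arr a (arr U T) ∈ S, realized by λx n. n (λy z. pair (pair x y) z)
  set A2 := arr b (tens arr a b) with hA2
  set A3 := arr b (arr c T) with hA3
  have hp3 : pairc arr ≤ arr a A2 := pair_le arr harr_mono harr_inf a b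
  have hp4 : pairc arr ≤ arr (tens arr a b) (arr c T) :=
    pair_le arr harr_mono harr_inf (tens arr a b) c
  have hBp : app arr (Bc arr) (pairc arr) ≤ arr A2 A3 :=
    app_le arr harr_mono (B_le arr b (tens arr a b) (arr c T)) hp4
  have hN : app arr (app arr (Bc arr) (app arr (Bc arr) (pairc arr))) (pairc arr) ≤
      arr a A3 :=
    app_le arr harr_mono (app_le arr harr_mono (B_le arr a A2 A3) hBp) hp3
  have hIU : Ic arr ≤ arr U (arr A3 T) :=
    le_trans (I_le arr U)
      (harr_mono U U U (arr A3 T) le_rfl (tens_le arr b c T))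
  have hCI : app arr (Cc arr) (Ic arr) ≤ arr A3 (arr U T) :=
    app_le arr harr_mono (C_le arr U A3 T) hIU
  have hfinal : app arr (app arr (Bc arr) (app arr (Cc arr) (Ic arr)))
      (app arr (app arr (Bc arr) (app arr (Bc arr) (pairc arr))) (pairc arr)) ≤
      arr a (arr U T) :=
    app_le arr harr_mono (app_le arr harr_mono (B_le arr a A3 (arr U T)) hCI) hN
  have hmem : app arr (app arr (Bc arr) (app arr (Cc arr) (Ic arr)))
      (app arr (app arr (Bc arr) (app arr (Bc arr) (pairc arr))) (pairc arr)) ∈ S :=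
    app_mem arr harr_inf hS
      (app_mem arr harr_inf hS (B_mem arr hS)
        (app_mem arr harr_inf hS (C_mem arr hS) (I_mem arr hS)))
      (app_mem arr harr_inf hS
        (app_mem arr harr_inf hS (B_mem arr hS)
          (app_mem arr harr_inf hS (B_mem arr hS)
            (pair_mem arr harr_mono harr_inf hS)))
        (pair_mem arr harr_mono harr_inf hS))
  exact mem_of_le arr hS hmem hfinal

include harr_mono harr_inf hS in
lemma unit1 (a : α) : ent arr S (tens arr a (Ic arr)) a := by
  refine adj2 arr harr_mono harr_inf hS a (Ic arr) a ?_
  have hI : Ic arr ≤ arr (Ic arr) (arr a a) :=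
    le_trans (I_le arr (arr a a))
      (harr_mono (arr a a) (Ic arr) (arr a a) (arr a a) (I_le arr a) le_rfl)
  have hfinal : app arr (Cc arr) (Ic arr) ≤ arr a (arr (Ic arr) a) :=
    app_le arr harr_mono (C_le arr (Ic arr) a a) hI
  exact mem_of_le arr hS
    (app_mem arr harr_inf hS (C_mem arr hS) (I_mem arr hS)) hfinal

include harr_mono harr_inf hS in
lemma unit2 (a : α) : ent arr S a (tens arr a (Ic arr)) := by
  set T := tens arr a (Ic arr) with hT
  have hCp : app arr (Cc arr) (pairc arr) ≤ arr (Ic arr) (arr a T) :=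
    app_le arr harr_mono (C_le arr a (Ic arr) T)
      (pair_le arr harr_mono harr_inf a (Ic arr))
  have hfinal : app arr (app arr (Cc arr) (pairc arr)) (Ic arr) ≤ arr a T :=
    app_le arr harr_mono hCp le_rfl
  exact mem_of_le arr hS
    (app_mem arr harr_inf hS
      (app_mem arr harr_inf hS (C_mem arr hS)
        (pair_mem arr harr_mono harr_inf hS))
      (I_mem arr hS)) hfinal

end

end Stmt8Aux

theorem stmt_8 {α : Type*} [CompleteLattice α] (arr : α → α → α)
    (harr_mono : ∀ a a' b b' : α, a' ≤ a → b ≤ b' → arr a b ≤ arr a' b')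
    (harr_inf : ∀ (a : α) (B : Set α), arr a (sInf B) = ⨅ b ∈ B, arr a b)
    (S : Set α) (hS : LinSep arr S) :
    ∀ a b c : α,
      equivS arr S (tens arr a b) (tens arr b a) ∧
      equivS arr S (tens arr (tens arr a b) c) (tens arr a (tens arr b c)) ∧
      equivS arr S (tens arr a (⨅ x : α, arr x x)) a ∧
      equivS arr S (arr (tens arr a b) c) (arr a (arr b c)) := by
  intro a b c
  refine ⟨⟨?_, ?_⟩, ⟨?_, ?_⟩, ⟨?_, ?_⟩, ⟨?_, ?_⟩⟩
  · exact Stmt8Aux.comm arr harr_mono harr_inf hS a b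
  · exact Stmt8Aux.comm arr harr_mono harr_inf hS b a
  · exact Stmt8Aux.assoc1 arr harr_mono harr_inf hS a b c
  · exact Stmt8Aux.assoc2 arr harr_mono harr_inf hS a b c
  · exact Stmt8Aux.unit1 arr harr_mono harr_inf hS a
  · exact Stmt8Aux.unit2 arr harr_mono harr_inf hS a
  · exact Stmt8Aux.curry1 arr harr_mono harr_inf hS a b c
  · exact Stmt8Aux.curry2 arr harr_mono harr_inf hS a b c
end

section
/- Let (𝒜, ≼, →) be an implicative structure and S ⊆ 𝒜 a linear separator. Then for all a, b, c, d ∈ 𝒜: (1) (a → b) ⊗ a ⊢_S b (modus ponens); (2) a ⊢_S b → (a ⊗ b) (pairing); (3) (a → b) ⊗ (b → c) ⊢_S (a → c) (transitivity); (4) (a → b) ⊗ (c → d) ⊢_S (a ⊗ c) → (b ⊗ d) (tensor rule). -/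
section Aux

variable {α : Type*} [CompleteLattice α] (arr : α → α → α)

/-- identity combinator -/
def Ic : α := ⨅ a : α, arr a a
/-- composition combinator -/
def Bc : α := ⨅ a : α, ⨅ b : α, ⨅ c : α, arr (arr b c) (arr (arr a b) (arr a c))
/-- exchange combinator -/
def Cc : α := ⨅ a : α, ⨅ b : α, ⨅ c : α, arr (arr a (arr b c)) (arr b (arr a c))
/-- application -/
def appE (s t : α) : α := sInf {c : α | s ≤ arr t c}

variable {arr}

lemma Ic_le (x : α) : Ic arr ≤ arr x x := iInf_le _ x

lemma Bc_le (x y z : α) : Bc arr ≤ arr (arr y z) (arr (arr x y) (arr x z)) :=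
  (iInf_le _ x).trans ((iInf_le _ y).trans (iInf_le _ z))

lemma Cc_le (x y z : α) : Cc arr ≤ arr (arr x (arr y z)) (arr y (arr x z)) :=
  (iInf_le _ x).trans ((iInf_le _ y).trans (iInf_le _ z))

lemma tens_le (u v c : α) : tens arr u v ≤ arr (arr u (arr v c)) c :=
  show (⨅ c : α, arr (arr u (arr v c)) c) ≤ _ from iInf_le _ c

lemma arr_iInf (harr_inf : ∀ (a : α) (B : Set α), arr a (sInf B) = ⨅ b ∈ B, arr a b)
    {ι : Sort*} (a : α) (f : ι → α) :
    arr a (⨅ i, f i) = ⨅ i, arr a (f i) := by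
  rw [← sInf_range, harr_inf, iInf_range]

lemma le_arr_appE (harr_inf : ∀ (a : α) (B : Set α), arr a (sInf B) = ⨅ b ∈ B, arr a b)
    (s t : α) : s ≤ arr t (appE arr s t) := by
  rw [appE, harr_inf]
  exact le_iInf₂ fun c hc => hc

lemma appE_le_arr (harr_mono : ∀ a a' b b' : α, a' ≤ a → b ≤ b' → arr a b ≤ arr a' b')
    {s t x y : α} (h1 : s ≤ arr x y) (h2 : t ≤ x) :
    appE arr s t ≤ y :=
  sInf_le (show s ≤ arr t y from h1.trans (harr_mono _ _ _ _ h2 le_rfl))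

variable {S : Set α}

lemma appE_mem (harr_mono : ∀ a a' b b' : α, a' ≤ a → b ≤ b' → arr a b ≤ arr a' b')
    (harr_inf : ∀ (a : α) (B : Set α), arr a (sInf B) = ⨅ b ∈ B, arr a b)
    (hS : LinSep arr S) {s t : α} (hs : s ∈ S) (ht : t ∈ S) : appE arr s t ∈ S :=
  hS.2.2.2.2 t _ ht (hS.1 s _ hs (le_arr_appE harr_inf s t))

/-- The combinator `T = C I` with `T ≤ x → (x → y) → y`. -/
def Tc (arr : α → α → α) : α := appE arr (Cc arr) (Ic arr)

lemma Tc_le (harr_mono : ∀ a a' b b' : α, a' ≤ a → b ≤ b' → arr a b ≤ arr a' b')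
    (x y : α) : Tc arr ≤ arr x (arr (arr x y) y) :=
  appE_le_arr harr_mono (Cc_le _ _ _) (Ic_le _)

lemma Tc_mem (harr_mono : ∀ a a' b b' : α, a' ≤ a → b ≤ b' → arr a b ≤ arr a' b')
    (harr_inf : ∀ (a : α) (B : Set α), arr a (sInf B) = ⨅ b ∈ B, arr a b)
    (hS : LinSep arr S) : Tc arr ∈ S :=
  appE_mem harr_mono harr_inf hS hS.2.2.2.1 hS.2.1

/-- Elimination of a tensor on the left of an entailment. -/
lemma tens_elim (harr_mono : ∀ a a' b b' : α, a' ≤ a → b ≤ b' → arr a b ≤ arr a' b')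
    (harr_inf : ∀ (a : α) (B : Set α), arr a (sInf B) = ⨅ b ∈ B, arr a b)
    (hS : LinSep arr S) {u v z w : α} (hw_mem : w ∈ S) (hw : w ≤ arr u (arr v z)) :
    arr (tens arr u v) z ∈ S := by
  have h1 : appE arr (Tc arr) w ≤ arr (arr (arr u (arr v z)) z) z :=
    appE_le_arr harr_mono (Tc_le harr_mono (arr u (arr v z)) z) hw
  have h2 : appE arr (Tc arr) w ≤ arr (tens arr u v) z :=
    h1.trans (harr_mono _ _ _ _ (tens_le u v z) le_rfl)
  exact hS.1 _ _ (appE_mem harr_mono harr_inf hS (Tc_mem harr_mono harr_inf hS) hw_mem) h2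

lemma le_arr2_tens (harr_inf : ∀ (a : α) (B : Set α), arr a (sInf B) = ⨅ b ∈ B, arr a b)
    {w p q u v : α}
    (h : ∀ c, w ≤ arr p (arr q (arr (arr u (arr v c)) c))) :
    w ≤ arr p (arr q (tens arr u v)) := by
  rw [tens, arr_iInf harr_inf, arr_iInf harr_inf]
  exact le_iInf h

lemma le_arr3_tens (harr_inf : ∀ (a : α) (B : Set α), arr a (sInf B) = ⨅ b ∈ B, arr a b)
    {w p q r u v : α}
    (h : ∀ c, w ≤ arr p (arr q (arr r (arr (arr u (arr v c)) c)))) :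
    w ≤ arr p (arr q (arr r (tens arr u v))) := by
  rw [tens, arr_iInf harr_inf, arr_iInf harr_inf, arr_iInf harr_inf]
  exact le_iInf h

end Aux

theorem stmt_9 {α : Type*} [CompleteLattice α] (arr : α → α → α)
    (harr_mono : ∀ a a' b b' : α, a' ≤ a → b ≤ b' → arr a b ≤ arr a' b')
    (harr_inf : ∀ (a : α) (B : Set α), arr a (sInf B) = ⨅ b ∈ B, arr a b)
    (S : Set α) (hS : LinSep arr S) :
    ∀ a b c d : α,
      ent arr S (tens arr (arr a b) a) b ∧
      ent arr S a (arr b (tens arr a b)) ∧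
      ent arr S (tens arr (arr a b) (arr b c)) (arr a c) ∧
      ent arr S (tens arr (arr a b) (arr c d)) (arr (tens arr a c) (tens arr b d)) := by
  intro a b c d
  have hI : Ic arr ∈ S := hS.2.1
  have hB : Bc arr ∈ S := hS.2.2.1
  have hC : Cc arr ∈ S := hS.2.2.2.1
  have hT : Tc arr ∈ S := Tc_mem harr_mono harr_inf hS
  refine ⟨?_, ?_, ?_, ?_⟩
  · -- modus ponens : (a → b) ⊗ a ⊢ b
    exact tens_elim harr_mono harr_inf hS hI (Ic_le (arr a b))
  · -- pairing : a ⊢ b → (a ⊗ b)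
    -- w₂ = B C T  with  w₂ ≤ a → b → (a → b → c) → c
    have hw2mem : appE arr (appE arr (Bc arr) (Cc arr)) (Tc arr) ∈ S :=
      appE_mem harr_mono harr_inf hS
        (appE_mem harr_mono harr_inf hS hB hC) hT
    have hw2 : ∀ c : α,
        appE arr (appE arr (Bc arr) (Cc arr)) (Tc arr) ≤
          arr a (arr b (arr (arr a (arr b c)) c)) := fun c =>
      appE_le_arr harr_mono
        (appE_le_arr harr_mono (Bc_le _ _ _) (Cc_le _ _ _))
        (Tc_le harr_mono a (arr b c))
    exact hS.1 _ _ hw2mem (le_arr2_tens harr_inf hw2)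
  · -- transitivity : (a → b) ⊗ (b → c) ⊢ a → c
    have hw3mem : appE arr (Cc arr) (Bc arr) ∈ S :=
      appE_mem harr_mono harr_inf hS hC hB
    have hw3 : appE arr (Cc arr) (Bc arr) ≤
        arr (arr a b) (arr (arr b c) (arr a c)) :=
      appE_le_arr harr_mono (Cc_le _ _ _) (Bc_le _ _ _)
    exact tens_elim harr_mono harr_inf hS hw3mem hw3
  · -- tensor rule : (a → b) ⊗ (c → d) ⊢ (a ⊗ c) → (b ⊗ d)
    -- W = B (B (C B)) (B C (B (B C) (B (B (B B)) (C B))))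
    -- with  W ≤ (a→b) → (c→d) → ((a→c→e)→e) → ((b→d→e)→e)
    set W : α :=
      appE arr (appE arr (Bc arr) (appE arr (Bc arr) (appE arr (Cc arr) (Bc arr))))
        (appE arr (appE arr (Bc arr) (Cc arr))
          (appE arr (appE arr (Bc arr) (appE arr (Bc arr) (Cc arr)))
            (appE arr (appE arr (Bc arr) (appE arr (Bc arr) (appE arr (Bc arr) (Bc arr))))
              (appE arr (Cc arr) (Bc arr))))) with hWdef
    have hWmem : W ∈ S := by
      refine appE_mem harr_mono harr_inf hS ?_ ?_
      · exact appE_mem harr_mono harr_inf hS hB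
          (appE_mem harr_mono harr_inf hS hB
            (appE_mem harr_mono harr_inf hS hC hB))
      · exact appE_mem harr_mono harr_inf hS
          (appE_mem harr_mono harr_inf hS hB hC)
          (appE_mem harr_mono harr_inf hS
            (appE_mem harr_mono harr_inf hS hB
              (appE_mem harr_mono harr_inf hS hB hC))
            (appE_mem harr_mono harr_inf hS
              (appE_mem harr_mono harr_inf hS hB
                (appE_mem harr_mono harr_inf hS hB
                  (appE_mem harr_mono harr_inf hS hB hB)))
              (appE_mem harr_mono harr_inf hS hC hB)))
    have hW : ∀ e : α, W ≤
        arr (arr a b) (arr (arr c d)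
          (arr (arr (arr a (arr c e)) e) (arr (arr b (arr d e)) e))) := by
      intro e
      exact appE_le_arr harr_mono
        (appE_le_arr harr_mono (Bc_le _ _ _)
          (appE_le_arr harr_mono (Bc_le _ _ _)
            (appE_le_arr harr_mono (Cc_le _ _ _) (Bc_le _ _ _))))
        (appE_le_arr harr_mono
          (appE_le_arr harr_mono (Bc_le _ _ _) (Cc_le _ _ _))
          (appE_le_arr harr_mono
            (appE_le_arr harr_mono (Bc_le _ _ _)
              (appE_le_arr harr_mono (Bc_le _ _ _) (Cc_le _ _ _)))
            (appE_le_arr harr_mono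
              (appE_le_arr harr_mono (Bc_le _ _ _)
                (appE_le_arr harr_mono (Bc_le _ _ _)
                  (appE_le_arr harr_mono (Bc_le _ _ _) (Bc_le _ _ _))))
              (appE_le_arr harr_mono (Cc_le _ _ _) (Bc_le _ _ _)))))
    have hW2 : ∀ e : α, W ≤
        arr (arr a b) (arr (arr c d)
          (arr (tens arr a c) (arr (arr b (arr d e)) e))) := fun e =>
      (hW e).trans (harr_mono _ _ _ _ le_rfl
        (harr_mono _ _ _ _ le_rfl
          (harr_mono _ _ _ _ (tens_le a c e) le_rfl)))
    have hW3 : W ≤ arr (arr a b) (arr (arr c d) (arr (tens arr a c) (tens arr b d))) :=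
      le_arr3_tens harr_inf hW2
    exact tens_elim harr_mono harr_inf hS hWmem hW3
end

section
/- Let (P, Ex, ⟪·,·⟫) be a linear realisability situation over a commutative group Θ with ⫠ ⊆ Θ, and suppose there is id ∈ P such that Ex(id, p) = p and ⟪id, p⟫ = 0 for all p ∈ P. Then for all types A, B, C, the project 0·id belongs to (B ⊸ C) ⊸ (A ⊸ B) ⊸ A ⊸ C (where ⊸ associates to the right); hence 0·id ∈ ⋂_{A,B,C types} ((B ⊸ C) ⊸ (A ⊸ B) ⊸ A ⊸ C). -/
/-! STATEMENT 15: the project `0·id` inhabits the B-combinator type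
`(B ⊸ C) ⊸ (A ⊸ B) ⊸ A ⊸ C` for all types `A`, `B`, `C`. -/

/-- Execution extended to projects: `Ex(α·a, β·b) = (α+β+⟪a,b⟫)·Ex(a,b)`. -/
def exP {P Θ : Type*} [AddCommGroup Θ] (ex : P → P → P) (m : P → P → Θ)
    (a b : Θ × P) : Θ × P :=
  (a.1 + b.1 + m a.2 b.2, ex a.2 b.2)

/-- Measurement extended to projects: `⟪α·a, β·b⟫ = α+β+⟪a,b⟫`. -/
def mP {P Θ : Type*} [AddCommGroup Θ] (m : P → P → Θ) (a b : Θ × P) : Θ :=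
  a.1 + b.1 + m a.2 b.2

/-- The orthogonal of a set of projects, w.r.t. the pole `Pe ⊆ Θ`. -/
def orthP {P Θ : Type*} [AddCommGroup Θ] (m : P → P → Θ) (Pe : Set Θ)
    (X : Set (Θ × P)) : Set (Θ × P) :=
  {p | ∀ q ∈ X, mP m p q ∈ Pe}

/-- A type is a biorthogonally closed set of projects. -/
def IsTyP {P Θ : Type*} [AddCommGroup Θ] (m : P → P → Θ) (Pe : Set Θ)
    (A : Set (Θ × P)) : Prop :=
  A = orthP m Pe (orthP m Pe A)

/-- Linear implication of sets of projects: `A ⊸ B = {𝔭 | ∀𝔞 ∈ A, Ex(𝔭,𝔞) ∈ B}`. -/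
def limpP {P Θ : Type*} [AddCommGroup Θ] (ex : P → P → P) (m : P → P → Θ)
    (A B : Set (Θ × P)) : Set (Θ × P) :=
  {p | ∀ a ∈ A, exP ex m p a ∈ B}

theorem stmt_15 {P Θ : Type*} [AddCommGroup Θ] (ex : P → P → P) (m : P → P → Θ)
    (Pe : Set Θ)
    (hassoc : ∀ p q r : P, ex (ex p q) r = ex p (ex q r))
    (htrefoil : ∀ p q r : P, m (ex p q) r + m p q = m p (ex q r) + m q r)
    (id : P) (hid1 : ∀ p : P, ex id p = p) (hid2 : ∀ p : P, m id p = 0) :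
    (∀ A B C : Set (Θ × P), IsTyP m Pe A → IsTyP m Pe B → IsTyP m Pe C →
      (0, id) ∈ limpP ex m (limpP ex m B C)
        (limpP ex m (limpP ex m A B) (limpP ex m A C))) ∧
    ((0, id) ∈ ⋂ A ∈ {X : Set (Θ × P) | IsTyP m Pe X},
        ⋂ B ∈ {X : Set (Θ × P) | IsTyP m Pe X},
          ⋂ C ∈ {X : Set (Θ × P) | IsTyP m Pe X},
            limpP ex m (limpP ex m B C)
              (limpP ex m (limpP ex m A B) (limpP ex m A C))) := by
  have hidP : ∀ f : Θ × P, exP ex m (0, id) f = f := by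
    intro f
    simp [exP, hid1, hid2]
  have hassocP : ∀ f g a : Θ × P,
      exP ex m (exP ex m f g) a = exP ex m f (exP ex m g a) := by
    intro f g a
    simp only [exP, Prod.mk.injEq]
    refine ⟨?_, hassoc _ _ _⟩
    have h : m (ex f.2 g.2) a.2 = m f.2 (ex g.2 a.2) + m g.2 a.2 - m f.2 g.2 := by
      rw [← htrefoil f.2 g.2 a.2]; abel
    rw [h]; abel
  have main : ∀ A B C : Set (Θ × P),
      (0, id) ∈ limpP ex m (limpP ex m B C)
        (limpP ex m (limpP ex m A B) (limpP ex m A C)) := by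
    intro A B C f hf g hg a ha
    rw [hidP, hassocP]
    exact hf _ (hg _ ha)
  refine ⟨fun A B C _ _ _ => main A B C, ?_⟩
  simp only [Set.mem_iInter]
  intro A _ B _ C _
  exact main A B C
end

section
/- Let (P, Ex, ⟪·,·⟫) be a linear realisability situation over a commutative group Θ with ⫠ ⊆ Θ, with symmetric measurement (⟪p,q⟫ = ⟪q,p⟫ for all p, q ∈ P), and suppose there is τ ∈ P such that Ex(τ, Ex(p,q)) = Ex(q,p) and ⟪τ, p⟫ = 0 for all p, q ∈ P. Then, writing 𝔱 := 0·τ: (1) Ex(𝔱, Ex(𝔭, 𝔮)) = Ex(𝔮, 𝔭) for all projects 𝔭, 𝔮; (2) for all types A, B, C, the project Ex(𝔱, 𝔱) belongs to (A ⊸ B ⊸ C) ⊸ B ⊸ A ⊸ C; hence Ex(𝔱,𝔱) ∈ ⋂_{A,B,C types} ((A ⊸ B ⊸ C) ⊸ B ⊸ A ⊸ C). -/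
theorem stmt_16 {P Θ : Type*} [AddCommGroup Θ] (ex : P → P → P) (m : P → P → Θ)
    (Pe : Set Θ)
    (hassoc : ∀ p q r : P, ex (ex p q) r = ex p (ex q r))
    (htrefoil : ∀ p q r : P, m (ex p q) r + m p q = m p (ex q r) + m q r)
    (hsym : ∀ p q : P, m p q = m q p)
    (τ : P) (hτ1 : ∀ p q : P, ex τ (ex p q) = ex q p) (hτ2 : ∀ p : P, m τ p = 0) :
    -- (1) 𝔱 swaps executions of projects
    (∀ 𝔭 𝔮 : Θ × P, exP ex m (0, τ) (exP ex m 𝔭 𝔮) = exP ex m 𝔮 𝔭) ∧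
    -- (2) Ex(𝔱,𝔱) inhabits (A ⊸ B ⊸ C) ⊸ B ⊸ A ⊸ C for all types A, B, C
    (∀ A B C : Set (Θ × P), IsTyP m Pe A → IsTyP m Pe B → IsTyP m Pe C →
      exP ex m (0, τ) (0, τ) ∈
        limpP ex m (limpP ex m A (limpP ex m B C))
          (limpP ex m B (limpP ex m A C))) ∧
    (exP ex m (0, τ) (0, τ) ∈
      ⋂ A ∈ {X : Set (Θ × P) | IsTyP m Pe X},
        ⋂ B ∈ {X : Set (Θ × P) | IsTyP m Pe X},
          ⋂ C ∈ {X : Set (Θ × P) | IsTyP m Pe X},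
            limpP ex m (limpP ex m A (limpP ex m B C))
              (limpP ex m B (limpP ex m A C))) := by
  have swap : ∀ 𝔭 𝔮 : Θ × P, exP ex m (0, τ) (exP ex m 𝔭 𝔮) = exP ex m 𝔮 𝔭 := by
    intro p q
    simp only [exP, hτ1, hτ2, Prod.mk.injEq]
    refine ⟨?_, trivial⟩
    rw [hsym p.2 q.2]; abel
  have assocP : ∀ p q r : Θ × P,
      exP ex m (exP ex m p q) r = exP ex m p (exP ex m q r) := by
    intro p q r
    simp only [exP, hassoc, Prod.mk.injEq, and_true]
    have h := htrefoil p.2 q.2 r.2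
    calc p.1 + q.1 + m p.2 q.2 + r.1 + m (ex p.2 q.2) r.2
        = p.1 + q.1 + r.1 + (m (ex p.2 q.2) r.2 + m p.2 q.2) := by abel
      _ = p.1 + q.1 + r.1 + (m p.2 (ex q.2 r.2) + m q.2 r.2) := by rw [h]
      _ = p.1 + (q.1 + r.1 + m q.2 r.2) + m p.2 (ex q.2 r.2) := by abel
  have key : ∀ f b a : Θ × P,
      exP ex m (exP ex m (exP ex m (exP ex m (0, τ) (0, τ)) f) b) a
        = exP ex m (exP ex m f a) b := by
    intro f b a
    have e1 : exP ex m (exP ex m (exP ex m (0, τ) (0, τ)) f) b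
        = exP ex m (0, τ) (exP ex m b f) := by
      rw [assocP, assocP, swap f b]
    rw [e1, assocP, assocP, swap b (exP ex m f a)]
  refine ⟨swap, ?_, ?_⟩
  · intro A B C _ _ _ f hf b hb a ha
    rw [key]
    exact hf a ha b hb
  · simp only [Set.mem_iInter]
    intro A hA B hB C hC f hf b hb a ha
    rw [key]
    exact hf a ha b hb
end

section
/- Let (𝒜, ≼, ⊸) be an implicative structure equipped with a monotone unary operation ! : 𝒜 → 𝒜, and define a → b := !a ⊸ b. Then (𝒜', ≼, →) with 𝒜' = 𝒜 is an implicative structure. Moreover, if S ⊆ 𝒜 is an exponential separator for (𝒜, ≼, ⊸, !), then S is an (intuitionistic) separator of (𝒜', ≼, →): it is upward closed, closed under →-modus ponens (a ∈ S and (a → b) ∈ S imply b ∈ S), and contains K^{𝒜'} := ⨅_{a,b} (a → b → a) and S^{𝒜'} := ⨅_{a,b,c} ((a → b → c) → (a → b) → a → c). -/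
section Helpers
variable {α : Type*} [CompleteLattice α] (limp : α → α → α)

private def iapp (a b : α) : α := sInf {c | a ≤ limp b c}

private theorem le_limp_iapp
    (hinf : ∀ (a : α) (B : Set α), limp a (sInf B) = ⨅ b ∈ B, limp a b)
    (a b : α) : a ≤ limp b (iapp limp a b) := by
  rw [iapp, hinf]
  exact le_iInf₂ fun c hc => hc

private theorem iapp_le
    (hm : ∀ a a' b b' : α, a' ≤ a → b ≤ b' → limp a b ≤ limp a' b')
    {u v w x : α} (hu : u ≤ limp v w) (hx : x ≤ v) :
    iapp limp u x ≤ w :=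
  sInf_le (hu.trans (hm _ _ _ _ hx le_rfl))

private theorem iapp_mem
    (hinf : ∀ (a : α) (B : Set α), limp a (sInf B) = ⨅ b ∈ B, limp a b)
    (S : Set α) (hup : ∀ a b : α, a ∈ S → a ≤ b → b ∈ S)
    (hmp : ∀ a b : α, a ∈ S → limp a b ∈ S → b ∈ S)
    {a b : α} (ha : a ∈ S) (hb : b ∈ S) : iapp limp a b ∈ S :=
  hmp b _ hb (hup a _ ha (le_limp_iapp limp hinf a b))

end Helpers

/-! STATEMENT 18: from an exponential implicative structure `(𝒜, ≼, ⊸, !)` one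
obtains an implicative structure `(𝒜', ≼, →)` with `a → b := !a ⊸ b`, and any
exponential separator of `(𝒜, ≼, ⊸, !)` is an intuitionistic separator of
`(𝒜', ≼, →)`. -/

theorem stmt_18 {α : Type*} [CompleteLattice α] (limp : α → α → α)
    (hlimp_mono : ∀ a a' b b' : α, a' ≤ a → b ≤ b' → limp a b ≤ limp a' b')
    (hlimp_inf : ∀ (a : α) (B : Set α), limp a (sInf B) = ⨅ b ∈ B, limp a b)
    (bang : α → α) (hbang : Monotone bang)
    (S : Set α)
    -- S is an exponential separator:
    (hup : ∀ a b : α, a ∈ S → a ≤ b → b ∈ S)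
    (hI : (⨅ a : α, limp a a) ∈ S)
    (hB : (⨅ a : α, ⨅ b : α, ⨅ c : α,
      limp (limp b c) (limp (limp a b) (limp a c))) ∈ S)
    (hC : (⨅ a : α, ⨅ b : α, ⨅ c : α,
      limp (limp a (limp b c)) (limp b (limp a c))) ∈ S)
    (hmp : ∀ a b : α, a ∈ S → limp a b ∈ S → b ∈ S)
    (hbangS : ∀ a : α, a ∈ S → bang a ∈ S)
    (hK : (⨅ a : α, ⨅ b : α, limp a (limp (bang b) a)) ∈ S)
    (hW : (⨅ a : α, ⨅ b : α,
      limp (limp (bang a) (limp (bang a) b)) (limp (bang a) b)) ∈ S)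
    (hF : (⨅ a : α, ⨅ b : α,
      limp (bang (limp a b)) (limp (bang a) (bang b))) ∈ S)
    (hD : (⨅ a : α, limp (bang a) a) ∈ S)
    (hdelta : (⨅ a : α, limp (bang a) (bang (bang a))) ∈ S) :
    -- (𝒜', ≼, →) with a → b := !a ⊸ b is an implicative structure:
    (∀ a a' b b' : α, a' ≤ a → b ≤ b' → limp (bang a) b ≤ limp (bang a') b') ∧
    (∀ (a : α) (B : Set α), limp (bang a) (sInf B) = ⨅ b ∈ B, limp (bang a) b) ∧
    -- and S is an intuitionistic separator of (𝒜', ≼, →):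
    -- upward closed,
    (∀ a b : α, a ∈ S → a ≤ b → b ∈ S) ∧
    -- closed under →-modus ponens,
    (∀ a b : α, a ∈ S → limp (bang a) b ∈ S → b ∈ S) ∧
    -- contains K^{𝒜'} = ⨅_{a,b} (a → b → a),
    ((⨅ a : α, ⨅ b : α, limp (bang a) (limp (bang b) a)) ∈ S) ∧
    -- contains S^{𝒜'} = ⨅_{a,b,c} ((a → b → c) → (a → b) → a → c).
    ((⨅ a : α, ⨅ b : α, ⨅ c : α,
      limp (bang (limp (bang a) (limp (bang b) c)))
        (limp (bang (limp (bang a) b)) (limp (bang a) c))) ∈ S) := by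
  -- abbreviations for the combinators
  set Bc : α := ⨅ a : α, ⨅ b : α, ⨅ c : α,
      limp (limp b c) (limp (limp a b) (limp a c)) with hBcDef
  set Cc : α := ⨅ a : α, ⨅ b : α, ⨅ c : α,
      limp (limp a (limp b c)) (limp b (limp a c)) with hCcDef
  set Kc : α := ⨅ a : α, ⨅ b : α, limp a (limp (bang b) a) with hKcDef
  set Wc : α := ⨅ a : α, ⨅ b : α,
      limp (limp (bang a) (limp (bang a) b)) (limp (bang a) b) with hWcDef
  set Fc : α := ⨅ a : α, ⨅ b : α,
      limp (bang (limp a b)) (limp (bang a) (bang b)) with hFcDef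
  set Dc : α := ⨅ a : α, limp (bang a) a with hDcDef
  set dc : α := ⨅ a : α, limp (bang a) (bang (bang a)) with hdcDef
  have hBle : ∀ a b c : α,
      Bc ≤ limp (limp b c) (limp (limp a b) (limp a c)) := fun a b c =>
    iInf_le_of_le a (iInf_le_of_le b (iInf_le _ c))
  have hCle : ∀ a b c : α,
      Cc ≤ limp (limp a (limp b c)) (limp b (limp a c)) := fun a b c =>
    iInf_le_of_le a (iInf_le_of_le b (iInf_le _ c))
  have hKle : ∀ a b : α, Kc ≤ limp a (limp (bang b) a) := fun a b =>
    iInf_le_of_le a (iInf_le _ b)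
  have hWle : ∀ a b : α,
      Wc ≤ limp (limp (bang a) (limp (bang a) b)) (limp (bang a) b) := fun a b =>
    iInf_le_of_le a (iInf_le _ b)
  have hFle : ∀ a b : α,
      Fc ≤ limp (bang (limp a b)) (limp (bang a) (bang b)) := fun a b =>
    iInf_le_of_le a (iInf_le _ b)
  have hDle : ∀ a : α, Dc ≤ limp (bang a) a := fun a => iInf_le _ a
  have hdle : ∀ a : α, dc ≤ limp (bang a) (bang (bang a)) := fun a => iInf_le _ a
  -- shorthand for application and its rules
  have amem : ∀ {a b : α}, a ∈ S → b ∈ S → iapp limp a b ∈ S :=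
    fun ha hb => iapp_mem limp hlimp_inf S hup hmp ha hb
  have ale : ∀ {u v w x : α}, u ≤ limp v w → x ≤ v → iapp limp u x ≤ w :=
    fun hu hx => iapp_le limp hlimp_mono hu hx
  refine ⟨fun a a' b b' ha hb => hlimp_mono _ _ _ _ (hbang ha) hb,
    fun a B => hlimp_inf _ _, hup,
    fun a b ha hab => hmp _ _ (hbangS a ha) hab, ?_, ?_⟩
  · -- K' := B K D
    have hkS : iapp limp (iapp limp Bc Kc) Dc ∈ S := amem (amem hB hK) hD
    refine hup _ _ hkS (le_iInf fun a => le_iInf fun b => ?_)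
    exact ale (ale (hBle (bang a) a (limp (bang b) a)) (hKle a b)) (hDle a)
  · -- S' := B (B W) (C (B B (B C (B (B B) D))) (C (B B F) δ))
    set q : α := iapp limp (iapp limp Cc (iapp limp (iapp limp Bc Bc) Fc)) dc
      with hq_def
    set r : α := iapp limp (iapp limp Bc Cc)
        (iapp limp (iapp limp Bc (iapp limp Bc Bc)) Dc) with hr_def
    set m : α := iapp limp (iapp limp Cc (iapp limp (iapp limp Bc Bc) r)) q
      with hm_def
    set t : α := iapp limp (iapp limp Bc (iapp limp Bc Wc)) m with ht_def
    have hqS : q ∈ S := amem (amem hC (amem (amem hB hB) hF)) hdelta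
    have hrS : r ∈ S := amem (amem hB hC) (amem (amem hB (amem hB hB)) hD)
    have hmS : m ∈ S := amem (amem hC (amem (amem hB hB) hrS)) hqS
    have htS : t ∈ S := amem (amem hB (amem hB hW)) hmS
    refine hup _ _ htS (le_iInf fun a => le_iInf fun b => le_iInf fun c => ?_)
    set A : α := bang a with hA_def
    set XT : α := bang (limp A (limp (bang b) c)) with hXT_def
    set YT : α := bang (limp A b) with hYT_def
    -- typing of q : YT ⊸ (A ⊸ !b)
    have hF1 : Fc ≤ limp YT (limp (bang A) (bang b)) := hFle A b
    have hbb1 : iapp limp Bc Bc ≤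
        limp (limp YT (limp (bang A) (bang b)))
          (limp YT (limp (limp A (bang A)) (limp A (bang b)))) :=
      ale (hBle YT (limp (bang A) (bang b))
            (limp (limp A (bang A)) (limp A (bang b))))
          (hBle A (bang A) (bang b))
    have hbbF : iapp limp (iapp limp Bc Bc) Fc ≤
        limp YT (limp (limp A (bang A)) (limp A (bang b))) := ale hbb1 hF1
    have hq : q ≤ limp YT (limp A (bang b)) :=
      ale (ale (hCle YT (limp A (bang A)) (limp A (bang b))) hbbF) (hdle a)
    -- typing of r : XT ⊸ ((A ⊸ !b) ⊸ (A ⊸ A ⊸ c))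
    have hD1 : Dc ≤ limp XT (limp A (limp (bang b) c)) :=
      hDle (limp A (limp (bang b) c))
    have hBB2 : iapp limp Bc Bc ≤
        limp (limp A (limp (bang b) c))
          (limp A (limp (limp A (bang b)) (limp A c))) :=
      ale (hBle A (limp (bang b) c) (limp (limp A (bang b)) (limp A c)))
          (hBle A (bang b) c)
    have hBBD : iapp limp (iapp limp Bc (iapp limp Bc Bc)) Dc ≤
        limp XT (limp A (limp (limp A (bang b)) (limp A c))) :=
      ale (ale (hBle XT (limp A (limp (bang b) c))
            (limp A (limp (limp A (bang b)) (limp A c)))) hBB2) hD1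
    have hr : r ≤ limp XT (limp (limp A (bang b)) (limp A (limp A c))) :=
      ale (ale (hBle XT (limp A (limp (limp A (bang b)) (limp A c)))
              (limp (limp A (bang b)) (limp A (limp A c))))
            (hCle A (limp A (bang b)) (limp A c))) hBBD
    -- typing of m : XT ⊸ YT ⊸ (A ⊸ A ⊸ c)
    have hBBr : iapp limp (iapp limp Bc Bc) r ≤
        limp XT (limp (limp YT (limp A (bang b))) (limp YT (limp A (limp A c)))) :=
      ale (ale (hBle XT (limp (limp A (bang b)) (limp A (limp A c)))
              (limp (limp YT (limp A (bang b))) (limp YT (limp A (limp A c)))))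
            (hBle YT (limp A (bang b)) (limp A (limp A c)))) hr
    have hmty : m ≤ limp XT (limp YT (limp A (limp A c))) :=
      ale (ale (hCle XT (limp YT (limp A (bang b)))
              (limp YT (limp A (limp A c)))) hBBr) hq
    -- typing of t : XT ⊸ YT ⊸ A ⊸ c
    have hBW : iapp limp Bc Wc ≤
        limp (limp YT (limp A (limp A c))) (limp YT (limp A c)) :=
      ale (hBle YT (limp A (limp A c)) (limp A c)) (hWle a c)
    exact ale (ale (hBle XT (limp YT (limp A (limp A c)))
          (limp YT (limp A c))) hBW) hmty
end
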